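/- arXiv:2604.27622 — 5 statements merged into one kernel-verified Lean document; each statement's English description precedes it below -/
import Mathlib

section
/- Consider binary sequences (u_j)_{j=0}^{m-1} with u_j ∈ {0,1} indicating x^{2,2} configurations and (v_j) indicating x^{1,1} configurations, with u_j + v_j ≤ 1. Define τ_j recursively for j ≥ 1 by: τ_j = 1 if either (u_j = 1 and u_{j-1} = 0 and v_{j-1} = 0) or (τ_{j-1} = 1 and v_j = 0), else τ_j can be 0. Then the constraints u_j − (v_{j-1} + u_{j-1}) ≤ τ_j, τ_{j-1} − v_j ≤ τ_j, and τ_j ≤ u_j (for all j), together with τ_{m-1} = 0, imply that whenever u_j = 1 there exists j' > j with v_{j'} = 1 or the u-run terminates with a merge, i.e., the component count propagated by τ returns to one before the last aisle. -/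
/-- Connectivity-propagation logic of the CC formulation.  With binary indicators
`u j` (the `x^{2,2}` configuration) and `v j` (the `x^{1,1}` configuration) satisfying
`u j + v j ≤ 1`, binary flags `τ j`, the linear constraints
`u j − (v (j−1) + u (j−1)) ≤ τ j`, `τ (j−1) − v j ≤ τ j`, `τ j ≤ u j`, and the terminal
condition `τ (m−1) = 0`, whenever `u j = 1` and two components are flagged (`τ j = 1`),
there is a later aisle `j' > j` (before the end of the warehouse) with `v j' = 1`,
i.e. the component count returns to one via a merge before the last aisle. -/
theorem component_flag_forces_merge (m : ℕ) (hm : 1 ≤ m) (u v τ : ℕ → ℕ)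
    (hu : ∀ j < m, u j ≤ 1) (hv : ∀ j < m, v j ≤ 1) (hτ : ∀ j < m, τ j ≤ 1)
    (huv : ∀ j < m, u j + v j ≤ 1)
    (h1 : ∀ j, 1 ≤ j → j < m → u j ≤ τ j + v (j - 1) + u (j - 1))
    (h2 : ∀ j, 1 ≤ j → j < m → τ (j - 1) ≤ τ j + v j)
    (h3 : ∀ j < m, τ j ≤ u j)
    (hlast : τ (m - 1) = 0) :
    ∀ j < m, u j = 1 → τ j = 1 → ∃ j', j < j' ∧ j' < m ∧ v j' = 1 := by
  have key : ∀ d j, j < m → m - 1 - j ≤ d → τ j = 1 → ∃ j', j < j' ∧ j' < m ∧ v j' = 1 := by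
    intro d
    induction d with
    | zero =>
      intro j hj hd hτj
      have : j = m - 1 := by omega
      rw [this, hlast] at hτj
      omega
    | succ d ih =>
      intro j hj hd hτj
      by_cases hje : j = m - 1
      · rw [hje, hlast] at hτj; omega
      · have hj1 : j + 1 < m := by omega
        have h2' := h2 (j + 1) (by omega) hj1
        simp only [Nat.add_sub_cancel] at h2'
        by_cases hvj : v (j + 1) = 1
        · exact ⟨j + 1, by omega, hj1, hvj⟩
        · have hv1 := hv (j + 1) hj1
          have hτ1 := hτ (j + 1) hj1
          have hτj1 : τ (j + 1) = 1 := by omega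
          obtain ⟨j', hjj', hj'm, hvj'⟩ := ih (j + 1) hj1 (by omega) hτj1
          exact ⟨j', by omega, hj'm, hvj'⟩
  intro j hj _ hτj
  exact key (m - 1 - j) j hj le_rfl hτj
end

section
/- In the single-block warehouse graph with two cross-aisle vertices a_j and b_j per aisle j, let T be a subgraph. Then for every aisle j, a_j and b_j are connected in T restricted to columns 0..j if and only if there exists j' ≤ j such that T contains the vertical pass edge of aisle j', and for all j'' with j' < j'' ≤ j, T contains horizontal edges in both cross-aisles between aisles j''−1 and j''. -/
/-- One step of movement in (the subgraph `T` of) the single-block warehouse ladder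
graph, restricted to aisle columns `0..j`.  Vertices are pairs `(j', s)` with `s = true`
for the top cross-aisle vertex `a_{j'}` and `s = false` for the bottom vertex `b_{j'}`.
`pass j'` says `T` contains the full vertical traversal of aisle `j'`; `Htop j''`
(resp. `Hbot j''`) says `T` contains a horizontal top (resp. bottom) cross-aisle edge
between aisles `j''` and `j'' + 1`. -/
def LadderStep (pass Htop Hbot : ℕ → Prop) (j : ℕ) :
    ℕ × Bool → ℕ × Bool → Prop := fun u v =>
  u.1 ≤ j ∧ v.1 ≤ j ∧
    ((u.1 = v.1 ∧ u.2 ≠ v.2 ∧ pass u.1) ∨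
     (u.2 = v.2 ∧
       ((v.1 = u.1 + 1 ∧ (if u.2 then Htop u.1 else Hbot u.1)) ∨
        (u.1 = v.1 + 1 ∧ (if u.2 then Htop v.1 else Hbot v.1)))))

private lemma reach_map {α : Type*} {r s : α → α → Prop} {f : α → α}
    (h : ∀ a b, r a b → Relation.ReflTransGen s (f a) (f b)) :
    ∀ {a b}, Relation.ReflTransGen r a b → Relation.ReflTransGen s (f a) (f b) := by
  intro a b hr
  induction hr with
  | refl => exact Relation.ReflTransGen.refl
  | tail _ hstep ih => exact ih.trans (h _ _ hstep)

private lemma ladder_mono {pass Htop Hbot : ℕ → Prop} {j k : ℕ} (hjk : j ≤ k)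
    {u v : ℕ × Bool} (h : LadderStep pass Htop Hbot j u v) :
    LadderStep pass Htop Hbot k u v := by
  obtain ⟨h1, h2, h3⟩ := h
  exact ⟨h1.trans hjk, h2.trans hjk, h3⟩

private lemma ladder_proj {pass Htop Hbot : ℕ → Prop} {j : ℕ} (hnp : ¬ pass (j + 1)) :
    ∀ u v : ℕ × Bool, LadderStep pass Htop Hbot (j + 1) u v →
      Relation.ReflTransGen (LadderStep pass Htop Hbot j)
        (min u.1 j, u.2) (min v.1 j, v.2) := by
  rintro ⟨a, sa⟩ ⟨b, sb⟩ ⟨h1, h2, h3⟩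
  simp only at h1 h2
  rcases h3 with ⟨hab, hne, hpass⟩ | ⟨hs, ⟨hab, hedge⟩ | ⟨hab, hedge⟩⟩
  · -- vertical pass
    simp only at hab hne hpass
    have ha : a ≤ j := by
      by_contra hc
      exact hnp (by rwa [show a = j + 1 by omega] at hpass)
    subst hab
    exact Relation.ReflTransGen.single
      ⟨by simp, by simp,
        Or.inl ⟨rfl, by simpa using hne, by simpa [Nat.min_eq_left ha] using hpass⟩⟩
  · -- move right : b = a + 1
    simp only at hs hab hedge
    subst hs
    by_cases hb : b ≤ j
    · have ha : a ≤ j := by omega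
      exact Relation.ReflTransGen.single
        ⟨by simp, by simp,
          Or.inr ⟨rfl, Or.inl ⟨by simp; omega, by simpa [Nat.min_eq_left ha] using hedge⟩⟩⟩
    · have hmm : min a j = min b j := by omega
      rw [show ((min a j, sa) : ℕ × Bool) = (min b j, sa) from by rw [hmm]]
  · -- move left : a = b + 1
    simp only at hs hab hedge
    subst hs
    by_cases ha : a ≤ j
    · have hb : b ≤ j := by omega
      exact Relation.ReflTransGen.single
        ⟨by simp, by simp,
          Or.inr ⟨rfl, Or.inr ⟨by simp; omega, by simpa [Nat.min_eq_left hb] using hedge⟩⟩⟩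
    · have hmm : min a j = min b j := by omega
      rw [show ((min a j, sa) : ℕ × Bool) = (min b j, sa) from by rw [hmm]]

/-- Left-to-right connectivity propagation in a single-block layout: the top vertex
`a_j` and bottom vertex `b_j` of aisle `j` are connected in the subgraph `T` using only
columns `0..j` if and only if some aisle `j' ≤ j` carries a full vertical pass of `T`
and both cross-aisles are horizontally continuous in `T` from aisle `j'` to aisle `j`. -/
theorem singleblock_connectivity_characterization
    (m j : ℕ) (hj : j < m) (pass Htop Hbot : ℕ → Prop) :
    Relation.ReflTransGen (LadderStep pass Htop Hbot j) (j, true) (j, false) ↔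
    ∃ j' ≤ j, pass j' ∧
      ∀ j'', j' < j'' → j'' ≤ j → Htop (j'' - 1) ∧ Hbot (j'' - 1) := by
  clear hj
  induction j with
  | zero =>
    constructor
    · intro h
      refine ⟨0, le_refl 0, ?_, fun j'' h1 h2 => by omega⟩
      rcases h.cases_head with heq | ⟨c, hstep, _⟩
      · simp at heq
      · rcases hstep with ⟨h1, h2, h3⟩
        rcases h3 with ⟨-, -, hpass⟩ | ⟨-, ⟨hab, -⟩ | ⟨hab, -⟩⟩
        · exact hpass
        · omega
        · simp at hab h1
    · rintro ⟨j', hj', hp, -⟩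
      interval_cases j'
      exact Relation.ReflTransGen.single ⟨le_refl _, le_refl _, Or.inl ⟨rfl, by simp, hp⟩⟩
  | succ j ih =>
    by_cases hp : pass (j + 1)
    · constructor
      · intro _
        exact ⟨j + 1, le_refl _, hp, fun j'' h1 h2 => by omega⟩
      · intro _
        exact Relation.ReflTransGen.single ⟨le_refl _, le_refl _, Or.inl ⟨rfl, by simp, hp⟩⟩
    · constructor
      · intro h
        have htop : Htop j := by
          rcases h.cases_head with heq | ⟨c, hstep, _⟩
          · simp at heq
          · rcases hstep with ⟨h1, h2, h3⟩
            rcases h3 with ⟨-, -, hpass⟩ | ⟨hs, ⟨hab, -⟩ | ⟨hab, hedge⟩⟩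
            · exact absurd hpass hp
            · simp only at hab h2; omega
            · simp only at hab hedge
              rw [show c.1 = j from by omega] at hedge
              simpa using hedge
        have hbot : Hbot j := by
          rcases h.cases_tail with heq | ⟨c, -, hstep⟩
          · simp at heq
          · rcases hstep with ⟨h1, h2, h3⟩
            rcases h3 with ⟨hab, -, hpass⟩ | ⟨hs, ⟨hab, hedge⟩ | ⟨hab, -⟩⟩
            · simp only at hab
              rw [hab] at hpass
              exact absurd hpass hp
            · simp only at hs hab hedge
              rw [show c.1 = j from by omega] at hedge
              rw [hs] at hedge
              simpa using hedge
            · simp only at hab h1; omega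
        have hproj := reach_map (ladder_proj hp) h
        simp only [show min (j + 1) j = j from by omega] at hproj
        obtain ⟨j', h1, h2, h3⟩ := ih.mp hproj
        refine ⟨j', by omega, h2, fun j'' hl hr => ?_⟩
        rcases Nat.lt_or_ge j'' (j + 1) with hc | hc
        · exact h3 j'' hl (by omega)
        · rw [show j'' - 1 = j from by omega]
          exact ⟨htop, hbot⟩
      · rintro ⟨j', hle, hp', hcont⟩
        have hj' : j' ≤ j := by
          rcases Nat.lt_or_ge j' (j + 1) with hc | hc
          · omega
          · exact absurd (by rwa [show j' = j + 1 from by omega] at hp') hp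
        have htop : Htop j := by
          have := (hcont (j + 1) (by omega) (le_refl _)).1
          simpa using this
        have hbot : Hbot j := by
          have := (hcont (j + 1) (by omega) (le_refl _)).2
          simpa using this
        have hmid : Relation.ReflTransGen (LadderStep pass Htop Hbot (j + 1))
            (j, true) (j, false) := by
          have := ih.mpr ⟨j', hj', hp', fun j'' a b => hcont j'' a (by omega)⟩
          exact reach_map (f := id) (fun a b hab =>
            Relation.ReflTransGen.single (ladder_mono (Nat.le_succ j) hab)) this
        have hhead : LadderStep pass Htop Hbot (j + 1) (j + 1, true) (j, true) :=
          ⟨le_refl _, by omega, Or.inr ⟨rfl, Or.inr ⟨rfl, by simpa using htop⟩⟩⟩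
        have htail : LadderStep pass Htop Hbot (j + 1) (j, false) (j + 1, false) :=
          ⟨by omega, le_refl _, Or.inr ⟨rfl, Or.inl ⟨rfl, by simpa using hbot⟩⟩⟩
        exact ((Relation.ReflTransGen.single hhead).trans hmid).trans
          (Relation.ReflTransGen.single htail)
end

section
/- Let m ≥ 1 and for each j ∈ {0,…,m−1} let d_top(j) and d_bot(j) be the degrees of the top and bottom vertices of aisle j in a subgraph T of the single-block warehouse graph, where horizontal configurations contribute: (2,0) adds 2 to bottom on both incident aisles, (0,2) adds 2 to top, (1,1) adds 1 to each of top and bottom, (2,2) adds 2 to each; a single vertical pass adds 1 to both top and bottom of its aisle; branch-and-picks add 2 to one endpoint. Then all vertex degrees of T are even if and only if, for every aisle j, the count (number of (1,1) configurations incident to aisle j) + (1 if aisle j has a vertical pass else 0) is even. -/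
/-- Degree-parity reduction for the single-block CC formulation.  For each pair of
consecutive aisles `j, j+1` let the binary variables `x20 j, x02 j, x11 j, x22 j`
indicate the horizontal configuration used ((2,0) adds 2 to the bottom vertices of
both incident aisles, (0,2) adds 2 to the top, (1,1) adds 1 to each of top and bottom,
(2,2) adds 2 to each); `pass j` indicates a single vertical pass of aisle `j`
(adding 1 to both its top and bottom vertex), and `bt j` (resp. `bb j`) counts the
branch-and-picks attached to the top (resp. bottom) vertex of aisle `j`, each adding 2.
Then all vertex degrees of the subgraph are even if and only if, for every aisle `j`,
the number of (1,1) configurations incident to aisle `j` plus the pass indicator of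
aisle `j` is even. -/
theorem even_degrees_iff_single_parity_per_aisle
    (m : ℕ) (x20 x02 x11 x22 pass bt bb : ℕ → ℕ)
    (h20 : ∀ j, x20 j ≤ 1) (h02 : ∀ j, x02 j ≤ 1)
    (h11 : ∀ j, x11 j ≤ 1) (h22 : ∀ j, x22 j ≤ 1) (hpass : ∀ j, pass j ≤ 1) :
    (∀ j < m,
      Even ((if 0 < j then 2 * x02 (j - 1) + x11 (j - 1) + 2 * x22 (j - 1) else 0) +
              2 * x02 j + x11 j + 2 * x22 j + pass j + 2 * bt j) ∧
      Even ((if 0 < j then 2 * x20 (j - 1) + x11 (j - 1) + 2 * x22 (j - 1) else 0) +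
              2 * x20 j + x11 j + 2 * x22 j + pass j + 2 * bb j)) ↔
    (∀ j < m, Even ((if 0 < j then x11 (j - 1) else 0) + x11 j + pass j)) := by
  constructor
  · intro h j hj
    obtain ⟨h1, h2⟩ := h j hj
    rcases Nat.eq_zero_or_pos j with rfl | hp
    · simp only [lt_irrefl, if_false] at h1 ⊢
      rcases h1 with ⟨k, hk⟩
      exact ⟨k - x02 0 - x22 0 - bt 0, by omega⟩
    · simp only [if_pos hp] at h1 ⊢
      rcases h1 with ⟨k, hk⟩
      exact ⟨k - x02 (j-1) - x22 (j-1) - x02 j - x22 j - bt j, by omega⟩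
  · intro h j hj
    have h1 := h j hj
    rcases Nat.eq_zero_or_pos j with rfl | hp
    · simp only [lt_irrefl, if_false] at h1 ⊢
      rcases h1 with ⟨k, hk⟩
      exact ⟨⟨k + x02 0 + x22 0 + bt 0, by omega⟩, ⟨k + x20 0 + x22 0 + bb 0, by omega⟩⟩
    · simp only [if_pos hp] at h1 ⊢
      rcases h1 with ⟨k, hk⟩
      exact ⟨⟨k + x02 (j-1) + x22 (j-1) + x02 j + x22 j + bt j, by omega⟩,
             ⟨k + x20 (j-1) + x22 (j-1) + x20 j + x22 j + bb j, by omega⟩⟩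
end

section
/- Under the EC visit constraint x_pass + p_i + q_i = 1 for each required position i, together with the chain constraints p_{i+1} ≤ p_i and q_{i−1} ≤ q_i within a block, the selected vertical edges in each subaisle form either a full traversal, or two (possibly empty) contiguous segments: one attached to the bottom cross-aisle covering positions 1..k and one attached to the top cross-aisle covering positions k+1..n, for some 0 ≤ k ≤ n. -/
/-- Within-subaisle structure of the EC core.  Under the visit constraints
`xpass + p i + q i = 1` for every position `i ∈ {1,…,n}` together with the chain
constraints `p (i+1) ≤ p i` and `q (i−1) ≤ q i`, the selected vertical edges form
either a full traversal, or two (possibly empty) contiguous segments: one attached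
to the bottom cross-aisle covering positions `1..k` and one attached to the top
cross-aisle covering positions `k+1..n`, for some `0 ≤ k ≤ n`. -/
theorem ec_subaisle_pattern (n : ℕ) (xpass : ℕ) (p q : ℕ → ℕ)
    (hxp : xpass ≤ 1)
    (hp : ∀ i, 1 ≤ i → i ≤ n → p i ≤ 1) (hq : ∀ i, 1 ≤ i → i ≤ n → q i ≤ 1)
    (hvisit : ∀ i, 1 ≤ i → i ≤ n → xpass + p i + q i = 1)
    (hpc : ∀ i, 1 ≤ i → i + 1 ≤ n → p (i + 1) ≤ p i)
    (hqc : ∀ i, 1 < i → i ≤ n → q (i - 1) ≤ q i) :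
    (xpass = 1 ∧ ∀ i, 1 ≤ i → i ≤ n → p i = 0 ∧ q i = 0) ∨
    (∃ k ≤ n, ∀ i, 1 ≤ i → i ≤ n → (p i = 1 ↔ i ≤ k) ∧ (q i = 1 ↔ k < i)) := by
  -- antitonicity of p on [1, n]
  have mono : ∀ j, j ≤ n → ∀ i, 1 ≤ i → i ≤ j → p j ≤ p i := by
    intro j
    induction j with
    | zero => intro _ i hi hij; omega
    | succ m ih =>
      intro hjn i hi hij
      rcases Nat.eq_or_lt_of_le hij with h | h
      · rw [h]
      · have hm : i ≤ m := by omega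
        have h1 : 1 ≤ m := by omega
        exact le_trans (hpc m h1 hjn) (ih (by omega) i hi hm)
  rcases Nat.le_one_iff_eq_zero_or_eq_one.mp hxp with hx0 | hx1
  · right
    set S := (Finset.Icc 1 n).filter (fun i => p i = 1) with hS
    refine ⟨S.sup id, ?_, ?_⟩
    · apply Finset.sup_le
      intro b hb
      simp only [hS, Finset.mem_filter, Finset.mem_Icc] at hb
      exact hb.1.2
    · intro i hi hin
      have hpq : p i + q i = 1 := by have := hvisit i hi hin; omega
      have hiff : p i = 1 ↔ i ≤ S.sup id := by
        constructor
        · intro hpi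
          exact Finset.le_sup (f := id) (by
            simp only [hS, Finset.mem_filter, Finset.mem_Icc]
            exact ⟨⟨hi, hin⟩, hpi⟩)
        · intro hik
          by_cases hne : S.Nonempty
          · obtain ⟨b, hb, hbeq⟩ := Finset.exists_mem_eq_sup S hne id
            simp only [id_eq] at hbeq
            simp only [hS, Finset.mem_filter, Finset.mem_Icc] at hb
            have : p b ≤ p i := mono b hb.1.2 i hi (by omega)
            have := hp i hi hin
            omega
          · have : S.sup id = 0 := by
              rw [Finset.not_nonempty_iff_eq_empty] at hne
              simp [hne]
            omega
      refine ⟨hiff, ?_⟩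
      constructor
      · intro hqi
        have : p i ≠ 1 := by omega
        by_contra hle
        exact this (hiff.mpr (by omega))
      · intro hk
        have : ¬ (p i = 1) := fun h => by omega
        omega
  · left
    refine ⟨hx1, fun i hi hin => ?_⟩
    have := hvisit i hi hin
    omega
end

section
/- In a two-block layout with three cross-aisle vertices a_j, b_j, c_j per aisle j (top, middle, bottom), suppose a_j and c_j are connected in a subgraph T using only edges in columns 0..j. Then at least one of the following holds: (i) a_j and c_j are connected via a path entirely through columns 0..j−1 together with horizontal edges at both a and c between columns j−1 and j; (ii) a_j and b_j are connected in columns 0..j and b_j and c_j are connected in columns 0..j. -/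
/-!
A path from `a_j` to `c_j` either visits `b_j` — which splits it into the two connections of (ii) —
or avoids it. In the latter case no vertical edge of column `j` is available, so the path leaves
`a_j` and enters `c_j` along horizontal edges to column `j - 1`, and clamping every column to
`j - 1` turns it into a path in columns `0..j-1`, since the steps inside column `j` become trivial.
-/

/-- One step of movement in (the subgraph `T` of) the two-block warehouse graph,
restricted to aisle columns `0..J`.  Vertices are pairs `(j, s)` with `s : Fin 3`
(`0` = top vertex `a_j`, `1` = middle vertex `b_j`, `2` = bottom vertex `c_j`).
`pab j` (resp. `pbc j`) says `T` contains the full vertical subaisle traversal joining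
`a_j` to `b_j` (resp. `b_j` to `c_j`); `H s j` says `T` contains a horizontal edge in
cross-aisle `s` between columns `j` and `j+1`. -/
def TwoBlockStep (pab pbc : ℕ → Prop) (H : Fin 3 → ℕ → Prop) (J : ℕ) :
    ℕ × Fin 3 → ℕ × Fin 3 → Prop := fun u v =>
  u.1 ≤ J ∧ v.1 ≤ J ∧
    ((u.1 = v.1 ∧
        ((pab u.1 ∧ ((u.2 = 0 ∧ v.2 = 1) ∨ (u.2 = 1 ∧ v.2 = 0))) ∨
         (pbc u.1 ∧ ((u.2 = 1 ∧ v.2 = 2) ∨ (u.2 = 2 ∧ v.2 = 1))))) ∨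
     (u.2 = v.2 ∧
        ((v.1 = u.1 + 1 ∧ H u.2 u.1) ∨ (u.1 = v.1 + 1 ∧ H u.2 v.1))))

open Relation

theorem Relation.ReflTransGen.avoid_or_through {α : Type*} {r : α → α → Prop} {a b x : α}
    (h : ReflTransGen r a b) (ha : a ≠ x) :
    ReflTransGen (fun u v => r u v ∧ u ≠ x ∧ v ≠ x) a b ∨
      (ReflTransGen r a x ∧ ReflTransGen r x b) := by
  induction h with
  | refl => exact .inl .refl
  | @tail b c _ hbc ih =>
    rcases ih with hav | ⟨hax, hxb⟩
    · have hb : b ≠ x := by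
        rcases hav.cases_tail with rfl | ⟨_, -, -, -, hb⟩
        exacts [ha, hb]
      by_cases hc : c = x
      · subst hc
        exact .inr ⟨(ReflTransGen.mono (fun _ _ h => h.1) _ _ hav).tail hbc, .refl⟩
      · exact .inl (hav.tail ⟨hbc, hb, hc⟩)
    · exact .inr ⟨hax, hxb.tail hbc⟩

namespace TwoBlockStep

variable {pab pbc : ℕ → Prop} {H : Fin 3 → ℕ → Prop}

theorem symm {J : ℕ} {u v : ℕ × Fin 3} (h : TwoBlockStep pab pbc H J u v) :
    TwoBlockStep pab pbc H J v u := by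
  obtain ⟨hu, hv, ⟨he, hvert⟩ | ⟨hs, hhor⟩⟩ := h
  · exact ⟨hv, hu, .inl ⟨he.symm, he ▸ by tauto⟩⟩
  · exact ⟨hv, hu, .inr ⟨hs.symm, hs ▸ by tauto⟩⟩

theorem exists_eq_left_of_ne_middle {J : ℕ} {s : Fin 3} {v : ℕ × Fin 3}
    (h : TwoBlockStep pab pbc H J (J, s) v) (hs : s ≠ 1) (hv : v ≠ (J, 1)) :
    ∃ k, J = k + 1 ∧ v = (k, s) ∧ H s k := by
  obtain ⟨v1, v2⟩ := v
  obtain ⟨-, hvJ, ⟨rfl, hvert⟩ | ⟨rfl, ⟨rfl, -⟩ | ⟨hJ, hH⟩⟩⟩ := h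
  · simp only [ne_eq, Prod.mk.injEq, true_and] at hv
    rcases hvert with ⟨-, ⟨-, rfl⟩ | ⟨rfl, -⟩⟩ | ⟨-, ⟨rfl, -⟩ | ⟨-, rfl⟩⟩ <;> contradiction
  · omega
  · exact ⟨v1, hJ, rfl, hH⟩

theorem reflTransGen_clamp {k : ℕ} {u v : ℕ × Fin 3} (h : TwoBlockStep pab pbc H (k + 1) u v)
    (hu : u ≠ (k + 1, 1)) (hv : v ≠ (k + 1, 1)) :
    ReflTransGen (TwoBlockStep pab pbc H k) (min u.1 k, u.2) (min v.1 k, v.2) := by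
  obtain ⟨u1, u2⟩ := u
  obtain ⟨v1, v2⟩ := v
  obtain ⟨hu1, hv1, hstep⟩ := h
  by_cases hle : u1 ≤ k ∧ v1 ≤ k
  · rw [min_eq_left hle.1, min_eq_left hle.2]
    exact .single ⟨hle.1, hle.2, hstep⟩
  · suffices u2 = v2 ∧ k ≤ u1 ∧ k ≤ v1 by
      obtain ⟨rfl, hku, hkv⟩ := this
      rw [min_eq_right hku, min_eq_right hkv]
    simp only [ne_eq, Prod.mk.injEq] at hu hv
    rcases hstep with ⟨he, hvert⟩ | ⟨hs, hhor⟩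
    · -- every vertical step in column `k + 1` touches `b_{k+1}`
      rcases hvert with ⟨-, ⟨rfl, rfl⟩ | ⟨rfl, rfl⟩⟩ | ⟨-, ⟨rfl, rfl⟩ | ⟨rfl, rfl⟩⟩ <;> omega
    · exact ⟨hs, by omega⟩

end TwoBlockStep

theorem twoblock_boundary_connection_disjunction_general
    (j : ℕ) (pab pbc : ℕ → Prop) (H : Fin 3 → ℕ → Prop)
    (hconn : Relation.ReflTransGen (TwoBlockStep pab pbc H j) (j, 0) (j, 2)) :
    (0 < j ∧
      Relation.ReflTransGen (TwoBlockStep pab pbc H (j - 1)) (j - 1, 0) (j - 1, 2) ∧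
      H 0 (j - 1) ∧ H 2 (j - 1)) ∨
    (Relation.ReflTransGen (TwoBlockStep pab pbc H j) (j, 0) (j, 1) ∧
      Relation.ReflTransGen (TwoBlockStep pab pbc H j) (j, 1) (j, 2)) := by
  rcases hconn.avoid_or_through (x := (j, 1)) (by simp) with hav | through
  · obtain ⟨v, ⟨hfirst, -, hv⟩, -⟩ := hav.cases_head.resolve_left (by simp)
    obtain ⟨k, rfl, -, hH0⟩ := hfirst.exists_eq_left_of_ne_middle (by decide) hv
    obtain ⟨u, -, hlast, hu, -⟩ := hav.cases_tail.resolve_left (by simp)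
    obtain ⟨k', hk, -, hH2⟩ := hlast.symm.exists_eq_left_of_ne_middle (by decide) hu
    obtain rfl : k = k' := by omega
    refine .inl ⟨k.succ_pos, ?_, hH0, hH2⟩
    simpa [Function.onFun] using ReflTransGen.lift' (fun p => (min p.1 k, p.2))
      (fun _ _ h => h.1.reflTransGen_clamp h.2.1 h.2.2) _ _ hav
  · exact .inr through

/-- Boundary-vertex connection disjunction for the two-block EC formulation: if the
top boundary vertex `a_j` and the bottom boundary vertex `c_j` are connected in the
subgraph using only columns `0..j`, then either (i) they are connected through the
previous aisle, i.e. `a_{j-1}` and `c_{j-1}` are connected in columns `0..j−1` and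
both boundary cross-aisles carry a horizontal edge between columns `j−1` and `j`,
or (ii) `a_j` is connected to the middle vertex `b_j` and `b_j` is connected to `c_j`,
all within columns `0..j`. -/
theorem twoblock_boundary_connection_disjunction
    (m j : ℕ) (hj : j < m) (pab pbc : ℕ → Prop) (H : Fin 3 → ℕ → Prop)
    (hconn : Relation.ReflTransGen (TwoBlockStep pab pbc H j) (j, 0) (j, 2)) :
    (0 < j ∧
      Relation.ReflTransGen (TwoBlockStep pab pbc H (j - 1)) (j - 1, 0) (j - 1, 2) ∧
      H 0 (j - 1) ∧ H 2 (j - 1)) ∨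
    (Relation.ReflTransGen (TwoBlockStep pab pbc H j) (j, 0) (j, 1) ∧
      Relation.ReflTransGen (TwoBlockStep pab pbc H j) (j, 1) (j, 2)) :=
  twoblock_boundary_connection_disjunction_general j pab pbc H hconn
end
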